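/- arXiv:math/0702140 — 4 statements merged into one kernel-verified Lean document; each statement's English description precedes it below -/
import Mathlib

section
/- Every derivation of the Weyl algebra A₁ is inner: if δ : A₁ → A₁ satisfies δ(ab) = δ(a)b + aδ(b) for all a,b, then there exists c ∈ A₁ with δ(a) = ca - ac for all a. -/
/-- The defining relation of the Weyl algebra `A₁`: `p·x = x·p + 1`. -/
inductive WeylRel : FreeAlgebra ℂ (Fin 2) → FreeAlgebra ℂ (Fin 2) → Prop
  | comm : WeylRel (FreeAlgebra.ι ℂ 1 * FreeAlgebra.ι ℂ 0)
      (FreeAlgebra.ι ℂ 0 * FreeAlgebra.ι ℂ 1 + 1)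

/-- The Weyl algebra `A₁ = ℂ⟨x,p⟩/(px - xp - 1)`. -/
abbrev WeylAlgebra : Type := RingQuot WeylRel

namespace WeylInner

open Polynomial

noncomputable def Xw : WeylAlgebra := RingQuot.mkAlgHom ℂ WeylRel (FreeAlgebra.ι ℂ 0)
noncomputable def Pw : WeylAlgebra := RingQuot.mkAlgHom ℂ WeylRel (FreeAlgebra.ι ℂ 1)

lemma rel : Pw * Xw = Xw * Pw + 1 := by
  have := RingQuot.mkAlgHom_rel ℂ WeylRel.comm
  simpa [Xw, Pw, map_mul, map_add, map_one] using this

noncomputable def w (ab : ℕ × ℕ) : WeylAlgebra := Xw ^ ab.1 * Pw ^ ab.2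

lemma pow_P_mul_X (b : ℕ) : Pw ^ b * Xw = Xw * Pw ^ b + (b : ℂ) • Pw ^ (b - 1) := by
  induction b with
  | zero => simp
  | succ b ih =>
    cases b with
    | zero => simpa using rel
    | succ b' =>
      set n := b' + 1 with hn
      have h1 : n - 1 + 1 = n := by omega
      rw [pow_succ, mul_assoc, rel, mul_add, mul_one, ← mul_assoc, ih, add_mul,
        smul_mul_assoc, mul_assoc, ← pow_succ, ← pow_succ, h1]
      push_cast
      module

lemma P_mul_pow_X (a : ℕ) : Pw * Xw ^ a = Xw ^ a * Pw + (a : ℂ) • Xw ^ (a - 1) := by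
  induction a with
  | zero => simp
  | succ a ih =>
    cases a with
    | zero => simpa using rel
    | succ a' =>
      set n := a' + 1 with hn
      have h1 : n - 1 + 1 = n := by omega
      rw [pow_succ, ← mul_assoc, ih, add_mul, mul_assoc, rel, smul_mul_assoc, mul_add,
        mul_one, ← pow_succ, h1,
        show Xw ^ n * (Xw * Pw) = Xw ^ (n+1) * Pw from by rw [← mul_assoc, ← pow_succ]]
      push_cast
      rw [← pow_succ]
      module


lemma comm_w_X (a b : ℕ) : w (a,b) * Xw - Xw * w (a,b) = (b:ℂ) • w (a, b-1) := by
  show Xw ^ a * Pw ^ b * Xw - Xw * (Xw ^ a * Pw ^ b) = (b:ℂ) • (Xw ^ a * Pw ^ (b-1))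
  rw [mul_assoc, pow_P_mul_X, mul_add, ← mul_assoc, ← pow_succ, ← mul_assoc, ← pow_succ',
    mul_smul_comm]
  abel

lemma comm_w_P (a b : ℕ) : w (a,b) * Pw - Pw * w (a,b) = -((a:ℂ) • w (a-1, b)) := by
  show Xw ^ a * Pw ^ b * Pw - Pw * (Xw ^ a * Pw ^ b) = -((a:ℂ) • (Xw ^ (a-1) * Pw ^ b))
  rw [← mul_assoc, P_mul_pow_X, add_mul, mul_assoc, ← pow_succ, mul_assoc, ← pow_succ',
    smul_mul_assoc]
  abel

noncomputable def S : Submodule ℂ WeylAlgebra := Submodule.span ℂ (Set.range w)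

lemma w_mem_S (ab : ℕ × ℕ) : w ab ∈ S := Submodule.subset_span ⟨ab, rfl⟩

lemma X_mul_mem {f : WeylAlgebra} (hf : f ∈ S) : Xw * f ∈ S := by
  induction hf using Submodule.span_induction with
  | mem x hx =>
    obtain ⟨⟨a, b⟩, rfl⟩ := hx
    have : Xw * w (a, b) = w (a+1, b) := by
      show Xw * (Xw ^ a * Pw ^ b) = Xw ^ (a+1) * Pw ^ b
      rw [← mul_assoc, ← pow_succ']
    rw [this]; exact w_mem_S _
  | zero => simp [Submodule.zero_mem]
  | add x y _ _ hx hy => rw [mul_add]; exact Submodule.add_mem _ hx hy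
  | smul c x _ hx => rw [mul_smul_comm]; exact Submodule.smul_mem _ _ hx

lemma mul_P_mem {f : WeylAlgebra} (hf : f ∈ S) : f * Pw ∈ S := by
  induction hf using Submodule.span_induction with
  | mem x hx =>
    obtain ⟨⟨a, b⟩, rfl⟩ := hx
    have : w (a, b) * Pw = w (a, b+1) := by
      show Xw ^ a * Pw ^ b * Pw = Xw ^ a * Pw ^ (b+1)
      rw [mul_assoc, ← pow_succ]
    rw [this]; exact w_mem_S _
  | zero => simp [Submodule.zero_mem]
  | add x y _ _ hx hy => rw [add_mul]; exact Submodule.add_mem _ hx hy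
  | smul c x _ hx => rw [smul_mul_assoc]; exact Submodule.smul_mem _ _ hx

lemma Pb_Xc_mem (b c : ℕ) : Pw ^ b * Xw ^ c ∈ S := by
  induction c generalizing b with
  | zero => simpa [w] using w_mem_S (0, b)
  | succ c ih =>
    have : Pw ^ b * Xw ^ (c+1) = Xw * (Pw ^ b * Xw ^ c) + (b:ℂ) • (Pw ^ (b-1) * Xw ^ c) := by
      rw [pow_succ', ← mul_assoc, pow_P_mul_X, add_mul, mul_assoc, smul_mul_assoc]
    rw [this]
    exact Submodule.add_mem _ (X_mul_mem (ih b)) (Submodule.smul_mem _ _ (ih (b-1)))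

lemma w_mul_w_mem (ab cd : ℕ × ℕ) : w ab * w cd ∈ S := by
  obtain ⟨a, b⟩ := ab; obtain ⟨c, d⟩ := cd
  have key : ∀ (f : WeylAlgebra), f ∈ S → ∀ n : ℕ, Xw ^ n * f ∈ S := by
    intro f hf n
    induction n with
    | zero => simpa using hf
    | succ n ih => rw [pow_succ', mul_assoc]; exact X_mul_mem ih
  have key2 : ∀ (f : WeylAlgebra), f ∈ S → ∀ n : ℕ, f * Pw ^ n ∈ S := by
    intro f hf n
    induction n with
    | zero => simpa using hf
    | succ n ih => rw [pow_succ, ← mul_assoc]; exact mul_P_mem ih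
  show Xw ^ a * Pw ^ b * (Xw ^ c * Pw ^ d) ∈ S
  have : Xw ^ a * Pw ^ b * (Xw ^ c * Pw ^ d) = Xw ^ a * ((Pw ^ b * Xw ^ c) * Pw ^ d) := by
    noncomm_ring
  rw [this]
  exact key _ (key2 _ (Pb_Xc_mem b c) d) a

lemma mul_mem_S {f g : WeylAlgebra} (hf : f ∈ S) (hg : g ∈ S) : f * g ∈ S := by
  induction hf using Submodule.span_induction with
  | mem x hx =>
    obtain ⟨ab, rfl⟩ := hx
    induction hg using Submodule.span_induction with
    | mem y hy => obtain ⟨cd, rfl⟩ := hy; exact w_mul_w_mem ab cd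
    | zero => simp [Submodule.zero_mem]
    | add y z _ _ hy hz => rw [mul_add]; exact Submodule.add_mem _ hy hz
    | smul c y _ hy => rw [mul_smul_comm]; exact Submodule.smul_mem _ _ hy
  | zero => simp [Submodule.zero_mem]
  | add x y _ _ hx hy => rw [add_mul]; exact Submodule.add_mem _ hx hy
  | smul c x _ hx => rw [smul_mul_assoc]; exact Submodule.smul_mem _ _ hx

lemma S_eq_top : S = ⊤ := by
  rw [eq_top_iff]
  rintro f -
  obtain ⟨g, rfl⟩ := RingQuot.mkAlgHom_surjective ℂ WeylRel f
  induction g using FreeAlgebra.induction with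
  | grade0 r =>
    rw [AlgHom.commutes, Algebra.algebraMap_eq_smul_one]
    have : (1 : WeylAlgebra) = w (0, 0) := by simp [w]
    rw [this]
    exact Submodule.smul_mem _ _ (w_mem_S _)
  | grade1 i =>
    fin_cases i
    · simpa [w, Xw] using w_mem_S (1, 0)
    · simpa [w, Pw] using w_mem_S (0, 1)
  | mul x y hx hy => rw [map_mul]; exact mul_mem_S hx hy
  | add x y hx hy => rw [map_add]; exact Submodule.add_mem _ hx hy


noncomputable def mX : Module.End ℂ (Polynomial ℂ) := LinearMap.mulLeft ℂ (X : Polynomial ℂ)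
noncomputable def Dp : Module.End ℂ (Polynomial ℂ) := Polynomial.derivative

lemma relEnd : Dp * mX = mX * Dp + 1 := by
  apply LinearMap.ext
  intro f
  show Dp (mX f) = mX (Dp f) + f
  show derivative ((X : Polynomial ℂ) * f) = (X : Polynomial ℂ) * derivative f + f
  rw [derivative_mul, derivative_X, one_mul]
  ring

noncomputable def ρ : WeylAlgebra →ₐ[ℂ] Module.End ℂ (Polynomial ℂ) :=
  RingQuot.liftAlgHom ℂ ⟨FreeAlgebra.lift ℂ ![mX, Dp], by
    rintro x y ⟨⟩
    simp only [map_mul, map_add, map_one, FreeAlgebra.lift_ι_apply, Matrix.cons_val_zero,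
      Matrix.cons_val_one, Matrix.head_cons]
    exact relEnd⟩

lemma ρ_X : ρ Xw = mX := by
  rw [Xw, ρ, RingQuot.liftAlgHom_mkAlgHom_apply]
  simp [FreeAlgebra.lift_ι_apply]

lemma ρ_P : ρ Pw = Dp := by
  rw [Pw, ρ, RingQuot.liftAlgHom_mkAlgHom_apply]
  simp [FreeAlgebra.lift_ι_apply]

lemma ρ_w (ab : ℕ × ℕ) : ρ (w ab) = mX ^ ab.1 * Dp ^ ab.2 := by
  rw [w, map_mul, map_pow, map_pow, ρ_X, ρ_P]

lemma mX_pow_apply (a : ℕ) (q : Polynomial ℂ) : (mX ^ a) q = (X : Polynomial ℂ) ^ a * q := by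
  rw [mX, LinearMap.pow_mulLeft, LinearMap.mulLeft_apply]

lemma Dp_pow_apply (b : ℕ) (q : Polynomial ℂ) : (Dp ^ b) q = derivative^[b] q :=
  Module.End.pow_apply _ _ _

lemma coeff_term (a b b₀ a₀ : ℕ) :
    Polynomial.coeff ((mX ^ a * Dp ^ b) ((X : Polynomial ℂ) ^ b₀)) a₀ =
      (Nat.descFactorial b₀ b : ℂ) * (if a₀ = a + (b₀ - b) then 1 else 0) := by
  rw [Module.End.mul_apply, Dp_pow_apply, iterate_derivative_X_pow_eq_smul, map_smul,
    mX_pow_apply, ← pow_add, coeff_smul, coeff_X_pow, smul_eq_mul]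

lemma applyl_eq (q : Polynomial ℂ) (F : Module.End ℂ (Polynomial ℂ)) :
    LinearMap.applyₗ q F = F q := rfl

lemma indep (s : Finset (ℕ × ℕ)) (g : ℕ × ℕ → ℂ)
    (h : ∑ ab ∈ s, g ab • w ab = 0) : ∀ ab ∈ s, g ab = 0 := by
  by_contra hcon
  push_neg at hcon
  obtain ⟨ab₁, hab₁s, hab₁⟩ := hcon
  set T : Finset ℕ := (s.filter fun ab => g ab ≠ 0).image Prod.snd with hT
  have hTne : T.Nonempty :=
    ⟨ab₁.2, Finset.mem_image.2 ⟨ab₁, Finset.mem_filter.2 ⟨hab₁s, hab₁⟩, rfl⟩⟩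
  set b₀ := T.min' hTne with hb₀
  obtain ⟨⟨a₀, b'⟩, hmem, hsnd⟩ := Finset.mem_image.1 (T.min'_mem hTne)
  simp only at hsnd
  subst hsnd
  rw [Finset.mem_filter] at hmem
  obtain ⟨hs₀, hg₀⟩ := hmem
  have hmin : ∀ ab ∈ s, g ab ≠ 0 → b₀ ≤ ab.2 := by
    intro ab h1 h2
    exact Finset.min'_le _ _ (Finset.mem_image.2 ⟨ab, Finset.mem_filter.2 ⟨h1, h2⟩, rfl⟩)
  -- apply ρ
  have h2 : ∑ ab ∈ s, g ab • (mX ^ ab.1 * Dp ^ ab.2) = 0 := by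
    have := congrArg ρ.toLinearMap h
    rw [map_sum, map_zero] at this
    simp only [map_smul] at this
    simpa only [AlgHom.toLinearMap_apply, ρ_w] using this
  -- evaluate
  have h3 := congrArg ((Polynomial.lcoeff ℂ a₀) ∘ₗ (LinearMap.applyₗ ((X : Polynomial ℂ) ^ b₀))) h2
  rw [map_sum, map_zero] at h3
  simp only [map_smul, LinearMap.comp_apply, applyl_eq, lcoeff_apply,
    smul_eq_mul] at h3
  rw [Finset.sum_eq_single_of_mem (a₀, b₀) hs₀] at h3
  · rw [coeff_term] at h3
    simp [Nat.sub_self, Nat.descFactorial_self, Nat.factorial_ne_zero] at h3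
    exact hg₀ h3
  · rintro ⟨a, b⟩ habs hne
    by_cases hg : g (a, b) = 0
    · rw [hg, zero_mul]
    · have hble : b₀ ≤ b := hmin _ habs hg
      rw [coeff_term]
      rcases lt_or_eq_of_le hble with hlt | heq
      · rw [Nat.descFactorial_eq_zero_iff_lt.2 hlt]
        simp
      · have hab : a ≠ a₀ := by
          intro hcontra
          exact hne (by simp [hcontra, ← heq])
        rw [← heq, Nat.sub_self, Nat.add_zero, if_neg (fun hh => hab hh.symm)]
        simp


lemma exists_adX (u : WeylAlgebra) : ∃ c, c * Xw - Xw * c = u := by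
  have hmem : u ∈ LinearMap.range (LinearMap.mulRight ℂ Xw - LinearMap.mulLeft ℂ Xw) := by
    suffices h : S ≤ LinearMap.range (LinearMap.mulRight ℂ Xw - LinearMap.mulLeft ℂ Xw) by
      exact h (S_eq_top ▸ Submodule.mem_top)
    rw [S, Submodule.span_le]
    rintro _ ⟨⟨a, b⟩, rfl⟩
    refine ⟨((b : ℂ) + 1)⁻¹ • w (a, b + 1), ?_⟩
    rw [map_smul]
    have h2 : (LinearMap.mulRight ℂ Xw - LinearMap.mulLeft ℂ Xw) (w (a, b + 1)) =
        ((b : ℂ) + 1) • w (a, b) := by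
      show w (a, b + 1) * Xw - Xw * w (a, b + 1) = _
      rw [comm_w_X]
      norm_num
    rw [h2, smul_smul, inv_mul_cancel₀ (Nat.cast_add_one_ne_zero b), one_smul]
  obtain ⟨c, hc⟩ := hmem
  exact ⟨c, by simpa using hc⟩

noncomputable def SX : Submodule ℂ WeylAlgebra :=
  Submodule.span ℂ (Set.range fun a : ℕ => Xw ^ a)

lemma SX_comm_X {f : WeylAlgebra} (hf : f ∈ SX) : f * Xw = Xw * f := by
  induction hf using Submodule.span_induction with
  | mem x hx =>
    obtain ⟨a, rfl⟩ := hx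
    rw [← pow_succ, ← pow_succ']
  | zero => simp
  | add x y _ _ hx hy => rw [add_mul, mul_add, hx, hy]
  | smul c x _ hx => rw [smul_mul_assoc, mul_smul_comm, hx]

lemma exists_adP_SX {v : WeylAlgebra} (hv : v ∈ SX) :
    ∃ c ∈ SX, c * Pw - Pw * c = v := by
  have hle : SX ≤ Submodule.map (LinearMap.mulRight ℂ Pw - LinearMap.mulLeft ℂ Pw) SX := by
    rw [SX, Submodule.span_le]
    rintro _ ⟨a, rfl⟩
    refine ⟨(-(((a : ℂ) + 1)⁻¹)) • Xw ^ (a + 1), Submodule.smul_mem _ _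
      (Submodule.subset_span ⟨a + 1, rfl⟩), ?_⟩
    rw [map_smul]
    have h2 : (LinearMap.mulRight ℂ Pw - LinearMap.mulLeft ℂ Pw) (Xw ^ (a + 1)) =
        -(((a : ℂ) + 1) • Xw ^ a) := by
      show Xw ^ (a + 1) * Pw - Pw * Xw ^ (a + 1) = _
      rw [P_mul_pow_X]
      push_cast
      simp
    rw [h2, smul_neg, neg_smul, neg_neg, smul_smul,
      inv_mul_cancel₀ (Nat.cast_add_one_ne_zero a), one_smul]
  obtain ⟨c, hcSX, hc⟩ := hle hv
  exact ⟨c, hcSX, by simpa using hc⟩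

lemma ker_adX_sub {f : WeylAlgebra} (hf : f * Xw = Xw * f) : f ∈ SX := by
  classical
  have hfS : f ∈ S := S_eq_top ▸ Submodule.mem_top
  rw [S, Finsupp.mem_span_range_iff_exists_finsupp] at hfS
  obtain ⟨c, hc⟩ := hfS
  rw [Finsupp.sum] at hc
  -- commutator of f with X expressed in terms of coefficients
  have h0 : ∑ ab ∈ c.support, (c ab * ab.2) • w (ab.1, ab.2 - 1) = 0 := by
    have : f * Xw - Xw * f = 0 := by rw [hf, sub_self]
    calc ∑ ab ∈ c.support, (c ab * ab.2) • w (ab.1, ab.2 - 1)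
        = ∑ ab ∈ c.support, c ab • (w ab * Xw - Xw * w ab) := by
          refine Finset.sum_congr rfl fun ab _ => ?_
          rw [comm_w_X ab.1 ab.2, smul_smul]
      _ = (∑ ab ∈ c.support, c ab • w ab) * Xw - Xw * ∑ ab ∈ c.support, c ab • w ab := by
          rw [Finset.sum_mul, Finset.mul_sum, ← Finset.sum_sub_distrib]
          refine Finset.sum_congr rfl fun ab _ => ?_
          rw [smul_mul_assoc, mul_smul_comm, smul_sub]
      _ = 0 := by rw [hc, hf, sub_self]
  -- all support elements have second coordinate 0
  have hall : ∀ ab ∈ c.support, ab.2 = 0 := by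
    by_contra hcon
    push_neg at hcon
    obtain ⟨ab', hab's, hab'⟩ := hcon
    set t := c.support.filter (fun ab => ab.2 ≠ 0) with ht
    have h1 : ∑ ab ∈ t, (c ab * ab.2) • w (ab.1, ab.2 - 1) = 0 := by
      rw [← h0]
      exact Finset.sum_filter_of_ne (by
        rintro ⟨a, b⟩ hs hne hb
        apply hne
        simp only at hb
        rw [hb]
        push_cast
        rw [mul_zero, zero_smul])
    set e : ℕ × ℕ → ℕ × ℕ := fun ab => (ab.1, ab.2 - 1) with he
    have hinj : ∀ x ∈ t, ∀ y ∈ t, e x = e y → x = y := by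
      rintro ⟨a, b⟩ hx ⟨a', b'⟩ hy hxy
      rw [ht, Finset.mem_filter] at hx hy
      simp only [he, Prod.mk.injEq] at hxy ⊢
      exact ⟨hxy.1, by omega⟩
    have h2 : ∑ cd ∈ t.image e, (c (cd.1, cd.2 + 1) * ((cd.2 : ℂ) + 1)) • w cd = 0 := by
      rw [Finset.sum_image hinj, ← h1]
      refine Finset.sum_congr rfl ?_
      rintro ⟨a, b⟩ hab
      rw [ht, Finset.mem_filter] at hab
      have hb : b - 1 + 1 = b := by omega
      simp only [he]
      rw [hb]
      congr 1
      rw [Nat.cast_sub (by omega : 1 ≤ b)]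
      push_cast
      ring
    have h3 := indep _ _ h2 (e ab') (Finset.mem_image_of_mem e (by
      rw [ht, Finset.mem_filter]; exact ⟨hab's, hab'⟩))
    have hb' : ab'.2 - 1 + 1 = ab'.2 := by omega
    rw [he] at h3
    simp only at h3
    rw [hb'] at h3
    rcases mul_eq_zero.1 h3 with h4 | h4
    · exact (Finsupp.mem_support_iff.1 hab's) (by
        have : ((ab'.1, ab'.2) : ℕ × ℕ) = ab' := rfl
        rwa [this] at h4)
    · have : ((ab'.2 - 1 : ℕ) : ℂ) + 1 = (ab'.2 : ℂ) := by
        rw [Nat.cast_sub (by omega)]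
        push_cast
        ring
      rw [this] at h4
      exact hab' (by exact_mod_cast h4)
  -- conclude
  rw [← hc]
  refine Submodule.sum_mem _ fun ab hab => Submodule.smul_mem _ _ ?_
  have : w ab = Xw ^ ab.1 := by
    have h5 : ab = (ab.1, (0 : ℕ)) := Prod.ext rfl (hall ab hab)
    rw [h5, w]
    simp
  rw [this]
  exact Submodule.subset_span ⟨ab.1, rfl⟩

end WeylInner

open WeylInner

/-- Every derivation of the Weyl algebra `A₁` is inner: any ℂ-linear map satisfying
the Leibniz rule is given by a commutator. -/
theorem weylAlgebra_derivation_inner (δ : WeylAlgebra →ₗ[ℂ] WeylAlgebra)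
    (hLeibniz : ∀ a b : WeylAlgebra, δ (a * b) = δ a * b + a * δ b) :
    ∃ c : WeylAlgebra, ∀ a : WeylAlgebra, δ a = c * a - a * c := by
  classical
  have h1 : δ 1 = 0 := by
    have h := hLeibniz 1 1
    simp only [one_mul, mul_one] at h
    have h2 : δ 1 + δ 1 = δ 1 + 0 := by rw [add_zero]; exact h.symm
    exact (add_left_cancel h2)
  obtain ⟨c₁, hc₁⟩ := WeylInner.exists_adX (δ WeylInner.Xw)
  have hrel := WeylInner.rel
  have hint : δ Pw * Xw + Pw * δ Xw = δ Xw * Pw + Xw * δ Pw := by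
    have h2 := hLeibniz Pw Xw
    have h3 := hLeibniz Xw Pw
    have h4 : δ (Pw * Xw) = δ (Xw * Pw) := by rw [hrel, map_add, h1, add_zero]
    rw [h2, h3] at h4
    exact h4
  have key2 : (c₁ * Pw - Pw * c₁) * Xw - Xw * (c₁ * Pw - Pw * c₁) =
      δ Xw * Pw - Pw * δ Xw := by
    have key : (c₁ * Pw - Pw * c₁) * Xw - Xw * (c₁ * Pw - Pw * c₁)
        - ((c₁ * Xw - Xw * c₁) * Pw - Pw * (c₁ * Xw - Xw * c₁))
        = (c₁ * (Pw * Xw) - (Pw * Xw) * c₁) - (c₁ * (Xw * Pw) - (Xw * Pw) * c₁) := by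
      simp only [sub_mul, mul_sub, mul_assoc]
      abel
    have e1 : c₁ * (Pw * Xw) - (Pw * Xw) * c₁ = c₁ * (Xw * Pw) - (Xw * Pw) * c₁ := by
      rw [hrel, mul_add, add_mul, mul_one, one_mul]
      abel
    rw [e1, sub_self] at key
    rw [hc₁] at key
    exact sub_eq_zero.1 key
  have hv'X : (δ Pw - (c₁ * Pw - Pw * c₁)) * Xw = Xw * (δ Pw - (c₁ * Pw - Pw * c₁)) := by
    have exp : (δ Pw - (c₁ * Pw - Pw * c₁)) * Xw - Xw * (δ Pw - (c₁ * Pw - Pw * c₁)) = 0 := by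
      calc (δ Pw - (c₁ * Pw - Pw * c₁)) * Xw - Xw * (δ Pw - (c₁ * Pw - Pw * c₁))
          = (δ Pw * Xw - Xw * δ Pw) -
            ((c₁ * Pw - Pw * c₁) * Xw - Xw * (c₁ * Pw - Pw * c₁)) := by
            simp only [sub_mul, mul_sub]
            abel
        _ = (δ Pw * Xw - Xw * δ Pw) - (δ Xw * Pw - Pw * δ Xw) := by rw [key2]
        _ = (δ Pw * Xw + Pw * δ Xw) - (δ Xw * Pw + Xw * δ Pw) := by abel
        _ = 0 := by rw [hint, sub_self]
    exact sub_eq_zero.1 exp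
  have hv'SX := WeylInner.ker_adX_sub hv'X
  obtain ⟨c₂, hc₂SX, hc₂⟩ := WeylInner.exists_adP_SX hv'SX
  have hc₂X : c₂ * Xw = Xw * c₂ := WeylInner.SX_comm_X hc₂SX
  refine ⟨c₁ + c₂, ?_⟩
  have hX : (c₁ + c₂) * Xw - Xw * (c₁ + c₂) = δ Xw := by
    have h5 : (c₁ + c₂) * Xw - Xw * (c₁ + c₂) =
        (c₁ * Xw - Xw * c₁) + (c₂ * Xw - Xw * c₂) := by
      simp only [add_mul, mul_add]
      abel
    rw [h5, hc₁, hc₂X, sub_self, add_zero]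
  have hP : (c₁ + c₂) * Pw - Pw * (c₁ + c₂) = δ Pw := by
    have h5 : (c₁ + c₂) * Pw - Pw * (c₁ + c₂) =
        (c₁ * Pw - Pw * c₁) + (c₂ * Pw - Pw * c₂) := by
      simp only [add_mul, mul_add]
      abel
    rw [h5, hc₂]
    abel
  intro a
  obtain ⟨g, rfl⟩ := RingQuot.mkAlgHom_surjective ℂ WeylRel a
  induction g using FreeAlgebra.induction with
  | grade0 r =>
    rw [AlgHom.commutes, Algebra.algebraMap_eq_smul_one, map_smul, h1, smul_zero,
      mul_smul_comm, smul_mul_assoc, mul_one, one_mul, sub_self]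
  | grade1 i =>
    fin_cases i
    · simpa [WeylInner.Xw] using hX.symm
    · simpa [WeylInner.Pw] using hP.symm
  | mul x y hx hy =>
    rw [map_mul, hLeibniz, hx, hy]
    simp only [sub_mul, mul_sub, mul_assoc]
    abel
  | add x y hx hy =>
    rw [map_add, map_add, hx, hy]
    simp only [mul_add, add_mul]
    abel
end

section
/- The Weyl algebra A₁ admits no nonzero trace: [A₁, A₁] = A₁, i.e. every element of A₁ is a finite sum of commutators ab - ba. -/
/-!
Let `D = [p, ·]`. Since `p x - x p = 1`, `D` is a derivation with `D x = 1` and `D p = 0`, so by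
the Leibniz rule every element of `A₁` is killed by some power of `D`. If `Dⁿ a = 0`, induction on
`n` using `(m + 1) xᵐ a = D (xᵐ⁺¹ a) - xᵐ⁺¹ D a` shows that every `xᵐ a` is a combination of
commutators; `m = 0` gives the theorem.
-/

section InnerDerivation

variable {K A : Type*} [CommRing K] [Ring A] [Algebra K A]

variable (K A) in
def commutatorSpan : Submodule K A :=
  Submodule.span K {c | ∃ u v : A, c = u * v - v * u}

theorem mul_sub_mul_mem_commutatorSpan (u v : A) : u * v - v * u ∈ commutatorSpan K A :=
  Submodule.subset_span ⟨u, v, rfl⟩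

variable (K) in
def innerDerivation (p : A) : Module.End K A :=
  LinearMap.mulLeft K p - LinearMap.mulRight K p

variable {p : A}

theorem innerDerivation_apply (a : A) : innerDerivation K p a = p * a - a * p := rfl

theorem innerDerivation_mem_commutatorSpan (a : A) :
    innerDerivation K p a ∈ commutatorSpan K A :=
  mul_sub_mul_mem_commutatorSpan p a

theorem innerDerivation_mul (a b : A) :
    innerDerivation K p (a * b) = innerDerivation K p a * b + a * innerDerivation K p b := by
  simp only [innerDerivation_apply, sub_mul, mul_sub, mul_assoc]
  abel

open Finset in
theorem innerDerivation_pow_mul (a b : A) (n : ℕ) :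
    (innerDerivation K p ^ n) (a * b) = ∑ ij ∈ antidiagonal n,
      n.choose ij.1 • ((innerDerivation K p ^ ij.1) a * (innerDerivation K p ^ ij.2) b) := by
  induction n with
  | zero => simp
  | succ n ih =>
    rw [Finset.sum_antidiagonal_choose_succ_nsmul
      (fun i j ↦ (innerDerivation K p ^ i) a * (innerDerivation K p ^ j) b) n]
    simp only [pow_succ', Module.End.mul_apply, ih, map_sum, map_nsmul,
      innerDerivation_mul, nsmul_add, Finset.sum_add_distrib]
    rw [add_comm, add_left_cancel_iff, Finset.sum_congr rfl]
    rintro ⟨i, j⟩ hij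
    rw [Nat.choose_symm_of_eq_add (Finset.HasAntidiagonal.mem_antidiagonal.mp hij).symm]

theorem innerDerivation_pow_add_mul_eq_zero {a b : A} {m k : ℕ}
    (ha : (innerDerivation K p ^ m) a = 0) (hb : (innerDerivation K p ^ k) b = 0) :
    (innerDerivation K p ^ (m + k)) (a * b) = 0 := by
  rw [innerDerivation_pow_mul]
  refine Finset.sum_eq_zero fun ij hij ↦ ?_
  obtain h | h : m ≤ ij.1 ∨ k ≤ ij.2 := by
    rw [Finset.HasAntidiagonal.mem_antidiagonal] at hij
    omega
  all_goals simp [Module.End.pow_map_zero_of_le h, ha, hb]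

theorem innerDerivation_apply_pow_succ {x : A} (hpx : p * x - x * p = 1) (m : ℕ) :
    innerDerivation K p (x ^ (m + 1)) = ((m : K) + 1) • x ^ m := by
  induction m with
  | zero => simpa [innerDerivation_apply] using hpx
  | succ m ih =>
    rw [pow_succ, innerDerivation_mul, ih, show innerDerivation K p x = 1 from hpx,
      smul_mul_assoc, ← pow_succ, mul_one]
    push_cast
    module

variable (K p) in
def locallyNilpotentSubalgebra : Subalgebra K A :=
  ((innerDerivation K p).maxGenEigenspace 0).toSubalgebra
    ((Module.End.mem_maxGenEigenspace _ _ _).mpr ⟨1, by simp [innerDerivation_apply]⟩)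
    fun a b ha hb ↦ by
      simp only [Module.End.mem_maxGenEigenspace, zero_smul, sub_zero] at ha hb ⊢
      obtain ⟨m, hm⟩ := ha
      obtain ⟨k, hk⟩ := hb
      exact ⟨m + k, innerDerivation_pow_add_mul_eq_zero hm hk⟩

theorem mem_locallyNilpotentSubalgebra {a : A} :
    a ∈ locallyNilpotentSubalgebra K p ↔ ∃ n, (innerDerivation K p ^ n) a = 0 := by
  simp [locallyNilpotentSubalgebra]

end InnerDerivation

section CanonicalPair

variable {K A : Type*} [Field K] [CharZero K] [Ring A] [Algebra K A] {p x : A}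

theorem pow_mul_mem_commutatorSpan (hpx : p * x - x * p = 1) {n : ℕ} {a : A}
    (ha : (innerDerivation K p ^ n) a = 0) (m : ℕ) : x ^ m * a ∈ commutatorSpan K A := by
  induction n generalizing a m with
  | zero => simp_all
  | succ n ih =>
    rw [pow_succ, Module.End.mul_apply] at ha
    have hsmul : ((m : K) + 1) • (x ^ m * a) =
        innerDerivation K p (x ^ (m + 1) * a) - x ^ (m + 1) * innerDerivation K p a := by
      rw [innerDerivation_mul, innerDerivation_apply_pow_succ hpx, smul_mul_assoc,
        add_sub_cancel_right]
    have hmem : ((m : K) + 1) • (x ^ m * a) ∈ commutatorSpan K A :=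
      hsmul ▸ sub_mem (innerDerivation_mem_commutatorSpan _) (ih ha (m + 1))
    exact (Submodule.smul_mem_iff _ (Nat.cast_add_one_ne_zero m)).mp hmem

theorem commutatorSpan_eq_top (hpx : p * x - x * p = 1)
    (hp : locallyNilpotentSubalgebra K p = ⊤) : commutatorSpan K A = ⊤ := by
  refine Submodule.eq_top_iff'.mpr fun a ↦ ?_
  obtain ⟨n, hn⟩ := mem_locallyNilpotentSubalgebra.mp (hp ▸ Algebra.mem_top : a ∈ _)
  simpa using pow_mul_mem_commutatorSpan hpx hn 0

end CanonicalPair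

namespace WeylAlgebra

noncomputable def x : WeylAlgebra := RingQuot.mkAlgHom ℂ WeylRel (FreeAlgebra.ι ℂ 0)

noncomputable def p : WeylAlgebra := RingQuot.mkAlgHom ℂ WeylRel (FreeAlgebra.ι ℂ 1)

theorem p_mul_x_sub_x_mul_p : p * x - x * p = 1 := by
  rw [sub_eq_iff_eq_add', p, x, ← map_mul, RingQuot.mkAlgHom_rel ℂ WeylRel.comm]
  simp

theorem adjoin_x_p : Algebra.adjoin ℂ {x, p} = ⊤ := by
  have hsurj := (RingQuot.mkAlgHom ℂ WeylRel).range_eq_top.mpr (RingQuot.mkAlgHom_surjective ℂ _)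
  rw [eq_top_iff, ← hsurj, ← Algebra.map_top, ← FreeAlgebra.adjoin_range_ι,
    ← Algebra.adjoin_image]
  refine Algebra.adjoin_mono ?_
  rintro _ ⟨_, ⟨i, rfl⟩, rfl⟩
  fin_cases i <;> simp [x, p]

theorem locallyNilpotentSubalgebra_p : locallyNilpotentSubalgebra ℂ p = ⊤ := by
  rw [eq_top_iff, ← adjoin_x_p, Algebra.adjoin_le_iff, Set.insert_subset_iff,
    Set.singleton_subset_iff, SetLike.mem_coe, SetLike.mem_coe,
    mem_locallyNilpotentSubalgebra, mem_locallyNilpotentSubalgebra]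
  refine ⟨⟨2, ?_⟩, ⟨1, ?_⟩⟩
  · rw [pow_two, Module.End.mul_apply, show innerDerivation ℂ p x = 1 from p_mul_x_sub_x_mul_p]
    simp [innerDerivation_apply]
  · simp [innerDerivation_apply]

end WeylAlgebra

/-- `[A₁, A₁] = A₁`: every element of the Weyl algebra lies in the linear span of
commutators; in particular `A₁` admits no nonzero trace. -/
theorem weylAlgebra_commutators_span :
    ∀ a : WeylAlgebra,
      a ∈ Submodule.span ℂ {x : WeylAlgebra | ∃ u v : WeylAlgebra, x = u * v - v * u} :=
  Submodule.eq_top_iff'.mp <|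
    commutatorSpan_eq_top WeylAlgebra.p_mul_x_sub_x_mul_p WeylAlgebra.locallyNilpotentSubalgebra_p
end

section
/- Let φ be a cyclic 2n-cochain on an algebra A (i.e. λφ = φ) that is a coboundary, φ = bψ with ψ a cyclic (2n-1)-cochain. Then for every idempotent e ∈ A, φ(e, e, ..., e) = 0. -/
/-
On a constant argument the cyclic permutation only contributes its sign, which is `-1` in odd
degree, so a cyclic odd cochain `ψ` vanishes at `(e, …, e)`. For an idempotent `e` every face of
`(e, …, e)` is again constant, so `(bψ)(e, …, e)` is a multiple of `ψ(e, …, e) = 0`.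
-/

/-- The Hochschild coboundary of an `n`-cochain (a ℂ-valued function of `n+1`
algebra variables):
`(bφ)(a₀,…,aₙ₊₁) = Σᵢ₌₀ⁿ (-1)ⁱ φ(a₀,…,aᵢaᵢ₊₁,…,aₙ₊₁) + (-1)ⁿ⁺¹ φ(aₙ₊₁a₀,a₁,…,aₙ)`. -/
noncomputable def hochschildB {A : Type*} [Ring A] (n : ℕ) (φ : (Fin (n + 1) → A) → ℂ) :
    (Fin (n + 2) → A) → ℂ :=
  fun a =>
    (∑ i : Fin (n + 1), (-1 : ℂ) ^ (i : ℕ) *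
      φ (fun j => if (j : ℕ) < (i : ℕ) then a j.castSucc
          else if (j : ℕ) = (i : ℕ) then a j.castSucc * a j.succ else a j.succ)) +
    (-1 : ℂ) ^ (n + 1) *
      φ (fun j => if (j : ℕ) = 0 then a (Fin.last (n + 1)) * a 0 else a j.castSucc)

/-- The operator `b'` (the Hochschild coboundary without the wraparound term). -/
noncomputable def hochschildB' {A : Type*} [Ring A] (n : ℕ) (φ : (Fin (n + 1) → A) → ℂ) :
    (Fin (n + 2) → A) → ℂ :=
  fun a =>
    ∑ i : Fin (n + 1), (-1 : ℂ) ^ (i : ℕ) *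
      φ (fun j => if (j : ℕ) < (i : ℕ) then a j.castSucc
          else if (j : ℕ) = (i : ℕ) then a j.castSucc * a j.succ else a j.succ)

/-- The cyclic permutation operator `(λφ)(a₀,…,aₙ) = (-1)ⁿ φ(aₙ,a₀,…,aₙ₋₁)`. -/
noncomputable def cyclicLambda {A : Type*} [Ring A] (n : ℕ) (φ : (Fin (n + 1) → A) → ℂ) :
    (Fin (n + 1) → A) → ℂ :=
  fun a => (-1 : ℂ) ^ n * φ (fun j => a (j - 1))

section

variable {A : Type*} [Ring A]

theorem cyclicLambda_apply_const (n : ℕ) (φ : (Fin (n + 1) → A) → ℂ) (a : A) :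
    cyclicLambda n φ (fun _ => a) = (-1) ^ n * φ (fun _ => a) :=
  rfl

theorem apply_const_eq_zero_of_cyclic_of_odd {n : ℕ} (hn : Odd n) {φ : (Fin (n + 1) → A) → ℂ}
    (hφ : cyclicLambda n φ = φ) (a : A) : φ (fun _ => a) = 0 := by
  have h := congrFun hφ (fun _ => a)
  rw [cyclicLambda_apply_const, hn.neg_one_pow] at h
  linear_combination -h / 2

theorem hochschildB_apply_const_of_idempotent (n : ℕ) (φ : (Fin (n + 1) → A) → ℂ) {e : A}
    (he : e * e = e) :
    hochschildB n φ (fun _ => e) = (∑ i : Fin (n + 2), (-1) ^ (i : ℕ)) * φ (fun _ => e) := by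
  have face (i : Fin (n + 1)) :
      (fun j : Fin (n + 1) => if (j : ℕ) < i then e else if (j : ℕ) = i then e * e else e) =
        fun _ => e := by
    funext j
    split_ifs <;> simp [he]
  have wrap : (fun j : Fin (n + 1) => if (j : ℕ) = 0 then e * e else e) = fun _ => e := by
    funext j
    split_ifs <;> simp [he]
  simp only [hochschildB, face, wrap, Fin.sum_univ_castSucc (n := n + 1), Fin.val_castSucc,
    Fin.val_last, add_mul, Finset.sum_mul]

end

theorem cyclic_coboundary_vanishes_on_idempotent_general {A : Type*} [Ring A] (m : ℕ)
    (ψ : (Fin (2 * m + 2) → A) → ℂ)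
    (hψ : cyclicLambda (2 * m + 1) ψ = ψ)
    (e : A) (he : e * e = e) :
    hochschildB (2 * m + 1) ψ (fun _ => e) = 0 := by
  rw [hochschildB_apply_const_of_idempotent _ ψ he,
    apply_const_eq_zero_of_cyclic_of_odd (odd_two_mul_add_one m) hψ e, mul_zero]

/-- A cyclic `2n`-cochain `φ` which is the coboundary `φ = bψ` of a cyclic
`(2n-1)`-cochain `ψ` vanishes on any idempotent: `φ(e,e,…,e) = 0`. -/
theorem cyclic_coboundary_vanishes_on_idempotent {A : Type*} [Ring A] (m : ℕ)
    (ψ : (Fin (2 * m + 2) → A) → ℂ)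
    (hψ : cyclicLambda (2 * m + 1) ψ = ψ)
    (hφ : cyclicLambda (2 * m + 2) (hochschildB (2 * m + 1) ψ) =
      hochschildB (2 * m + 1) ψ)
    (e : A) (he : e * e = e) :
    hochschildB (2 * m + 1) ψ (fun _ => e) = 0 :=
  cyclic_coboundary_vanishes_on_idempotent_general m ψ hψ e he
end

section
/- Let (H, F) be a 1-summable Fredholm module over an algebra A, with grading operator ε. Then the character φ defined by φ(a) = (1/2)·Tr(εF[F,a]) (the case n = 0 of Ch(H,F)(a₀,...,aₙ)) is a trace on A: φ(ab) = φ(ba) for all a, b ∈ A. -/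
open scoped ComplexConjugate ENNReal
open ContinuousLinearMap (adjoint)
set_option maxHeartbeats 1000000

noncomputable section FMAuxAll
variable {H : Type} [NormedAddCommGroup H] [InnerProductSpace ℂ H] [CompleteSpace H]




/-- Trace-class encoding used in the theorem statement. -/
def FMMemTC (x : H →L[ℂ] H) : Prop :=
  ∀ (ι : Type) (b : HilbertBasis ι ℂ H),
    Summable (fun i => ‖(inner ℂ (x (b i)) (b i) : ℂ)‖)

lemma fm_parseval {ι : Type} (c : HilbertBasis ι ℂ H) (x : H) :
    HasSum (fun j => ‖(inner ℂ (c j) x : ℂ)‖ ^ 2) (‖x‖ ^ 2) := by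
  have h2 := (c.hasSum_inner_mul_inner x x).mapL Complex.reCLM
  convert h2 using 2 with j
  · rw [← inner_conj_symm x (c j), Complex.normSq_eq_conj_mul_self.symm]
    simp [Complex.normSq_eq_norm_sq, ← Complex.ofReal_pow]
  · rw [inner_self_eq_norm_sq_to_K (𝕜 := ℂ)]
    simp [← Complex.ofReal_pow]

lemma fm_tsumE_eq {ι : Type} {f : ι → ℝ} (hf : ∀ i, 0 ≤ f i) {s : ℝ} (h : HasSum f s) :
    ∑' i, ENNReal.ofReal (f i) = ENNReal.ofReal s := by
  rw [← ENNReal.ofReal_tsum_of_nonneg hf h.summable, h.tsum_eq]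

lemma fm_summable_of_tsumE_ne_top {ι : Type} {f : ι → ℝ} (hf : ∀ i, 0 ≤ f i)
    (h : ∑' i, ENNReal.ofReal (f i) ≠ ⊤) : Summable f := by
  have h2 := ENNReal.summable_toReal h
  simpa [ENNReal.toReal_ofReal, hf] using h2

/-- The (possibly infinite) Hilbert–Schmidt sum of `R` in basis `b`. -/
def fmHsE (R : H →L[ℂ] H) {ι : Type} (b : HilbertBasis ι ℂ H) : ℝ≥0∞ :=
  ∑' i, ENNReal.ofReal (‖R (b i)‖ ^ 2)

lemma fmHsE_adjoint (R : H →L[ℂ] H) {ι ι' : Type} (b : HilbertBasis ι ℂ H)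
    (c : HilbertBasis ι' ℂ H) :
    fmHsE R b = fmHsE (adjoint R) c := by
  have key : ∀ i, ENNReal.ofReal (‖R (b i)‖ ^ 2)
      = ∑' j, ENNReal.ofReal (‖(inner ℂ (c j) (R (b i)) : ℂ)‖ ^ 2) := fun i =>
    (fm_tsumE_eq (fun j => sq_nonneg _) (fm_parseval c (R (b i)))).symm
  have key2 : ∀ j, ENNReal.ofReal (‖(adjoint R) (c j)‖ ^ 2)
      = ∑' i, ENNReal.ofReal (‖(inner ℂ (c j) (R (b i)) : ℂ)‖ ^ 2) := by
    intro j
    rw [(fm_tsumE_eq (fun i => sq_nonneg _) (fm_parseval b ((adjoint R) (c j)))).symm]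
    congr 1 with i
    rw [← ContinuousLinearMap.adjoint_inner_left R (b i) (c j), norm_inner_symm]
  rw [fmHsE, fmHsE]
  calc ∑' i, ENNReal.ofReal (‖R (b i)‖ ^ 2)
      = ∑' i, ∑' j, ENNReal.ofReal (‖(inner ℂ (c j) (R (b i)) : ℂ)‖ ^ 2) := tsum_congr key
    _ = ∑' j, ∑' i, ENNReal.ofReal (‖(inner ℂ (c j) (R (b i)) : ℂ)‖ ^ 2) := ENNReal.tsum_comm
    _ = _ := (tsum_congr key2).symm

lemma fmHsE_indep (R : H →L[ℂ] H) {ι ι' : Type} (b : HilbertBasis ι ℂ H)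
    (c : HilbertBasis ι' ℂ H) : fmHsE R b = fmHsE R c := by
  rw [fmHsE_adjoint R b c, fmHsE_adjoint (adjoint R) c c,
    ContinuousLinearMap.adjoint_adjoint]

/-- Hilbert–Schmidt predicate. -/
def FMHS (R : H →L[ℂ] H) : Prop :=
  ∀ (ι : Type) (b : HilbertBasis ι ℂ H), Summable (fun i => ‖R (b i)‖ ^ 2)

lemma fmHsE_ne_top_of_summable {R : H →L[ℂ] H} {ι : Type} {b : HilbertBasis ι ℂ H}
    (h : Summable (fun i => ‖R (b i)‖ ^ 2)) : fmHsE R b ≠ ⊤ := by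
  rw [fmHsE, fm_tsumE_eq (fun i => sq_nonneg _) h.hasSum]
  exact ENNReal.ofReal_ne_top

lemma FMHS.of_basis {R : H →L[ℂ] H} {ι : Type} {b : HilbertBasis ι ℂ H}
    (h : Summable (fun i => ‖R (b i)‖ ^ 2)) : FMHS R := by
  intro ι' c
  apply fm_summable_of_tsumE_ne_top (fun i => sq_nonneg _)
  have : (∑' i, ENNReal.ofReal (‖R (c i)‖ ^ 2)) = fmHsE R c := rfl
  rw [this, fmHsE_indep R c b]
  exact fmHsE_ne_top_of_summable h

lemma FMHS.adj {R : H →L[ℂ] H} (h : FMHS R) : FMHS (adjoint R) := by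
  obtain ⟨w, b, -⟩ := exists_hilbertBasis ℂ H
  apply FMHS.of_basis (b := b)
  apply fm_summable_of_tsumE_ne_top (fun i => sq_nonneg _)
  have : (∑' i, ENNReal.ofReal (‖(adjoint R) (b i)‖ ^ 2)) = fmHsE (adjoint R) b := rfl
  rw [this, ← fmHsE_adjoint R b b]
  exact fmHsE_ne_top_of_summable (h _ b)

lemma FMHS.mul_left (s : H →L[ℂ] H) {R : H →L[ℂ] H} (h : FMHS R) : FMHS (s * R) := by
  intro ι b
  refine Summable.of_nonneg_of_le (fun i => sq_nonneg _) (fun i => ?_)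
    (((h ι b).mul_left (‖s‖ ^ 2)))
  rw [ContinuousLinearMap.mul_apply, ← mul_pow]
  exact pow_le_pow_left₀ (norm_nonneg _) (s.le_opNorm _) 2

lemma FMHS.mul_right (s : H →L[ℂ] H) {R : H →L[ℂ] H} (h : FMHS R) : FMHS (R * s) := by
  have h2 : FMHS (adjoint s * adjoint R) := FMHS.mul_left _ h.adj
  have h3 := h2.adj
  rwa [← ContinuousLinearMap.star_eq_adjoint, ← ContinuousLinearMap.star_eq_adjoint,
    ← ContinuousLinearMap.star_eq_adjoint, ← star_mul, star_star] at h3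




/-- key swap lemma -/
lemma fm_swap {ι : Type} (b : HilbertBasis ι ℂ H) (A B : H →L[ℂ] H)
    (hA : Summable (fun i => ‖A (b i)‖ ^ 2)) (hB : Summable (fun i => ‖B (b i)‖ ^ 2)) :
    Summable (fun i => ‖(inner ℂ ((A * B) (b i)) (b i) : ℂ)‖) ∧
      ∑' i, (inner ℂ ((A * B) (b i)) (b i) : ℂ) = ∑' i, (inner ℂ ((B * A) (b i)) (b i) : ℂ) := by
  classical
  set M : ι × ι → ℂ :=
    fun p => (inner ℂ (B (b p.1)) (b p.2) : ℂ) * (inner ℂ (A (b p.2)) (b p.1) : ℂ) with hM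
  have key1 : ∀ i, HasSum (fun j => M (i, j)) ((inner ℂ ((A * B) (b i)) (b i) : ℂ)) := by
    intro i
    have h := b.hasSum_inner_mul_inner (B (b i)) ((adjoint A) (b i))
    simp only [ContinuousLinearMap.adjoint_inner_right] at h
    simpa only [hM, ContinuousLinearMap.mul_apply] using h
  have key2 : ∀ j, HasSum (fun i => M (i, j)) ((inner ℂ ((B * A) (b j)) (b j) : ℂ)) := by
    intro j
    have h := b.hasSum_inner_mul_inner (A (b j)) ((adjoint B) (b j))
    simp only [ContinuousLinearMap.adjoint_inner_right] at h
    have h2 : (fun i => (inner ℂ (A (b j)) (b i) : ℂ) * (inner ℂ (B (b i)) (b j) : ℂ))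
        = fun i => M (i, j) := by
      funext i
      rw [hM]
      dsimp only
      ring
    rw [h2] at h
    simpa only [ContinuousLinearMap.mul_apply] using h
  -- summability of ‖M‖ over the product
  have sumB : Summable (fun p : ι × ι => ‖(inner ℂ (B (b p.1)) (b p.2) : ℂ)‖ ^ 2) := by
    rw [summable_prod_of_nonneg (fun p => sq_nonneg _)]
    constructor
    · intro i
      have := (fm_parseval b (B (b i))).summable
      refine this.congr (fun j => ?_)
      rw [norm_inner_symm]
    · refine Summable.congr hB (fun i => ?_)
      have := (fm_parseval b (B (b i))).tsum_eq
      rw [← this]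
      exact tsum_congr (fun j => by rw [norm_inner_symm])
  have sumA : Summable (fun p : ι × ι => ‖(inner ℂ (A (b p.2)) (b p.1) : ℂ)‖ ^ 2) := by
    have h0 : Summable (fun p : ι × ι => ‖(inner ℂ (A (b p.1)) (b p.2) : ℂ)‖ ^ 2) := by
      rw [summable_prod_of_nonneg (fun p => sq_nonneg _)]
      constructor
      · intro i
        refine (fm_parseval b (A (b i))).summable.congr (fun j => ?_)
        rw [norm_inner_symm]
      · refine Summable.congr hA (fun i => ?_)
        rw [← (fm_parseval b (A (b i))).tsum_eq]
        exact tsum_congr (fun j => by rw [norm_inner_symm])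
    exact ((Equiv.prodComm ι ι).summable_iff).2 h0
  have sumM : Summable (fun p : ι × ι => ‖M p‖) := by
    refine Summable.of_nonneg_of_le (fun p => norm_nonneg _) (fun p => ?_)
      (((sumB.add sumA).div_const 2))
    rw [hM]
    simp only [norm_mul, Pi.add_apply]
    set u := ‖(inner ℂ (B (b p.1)) (b p.2) : ℂ)‖
    set v := ‖(inner ℂ (A (b p.2)) (b p.1) : ℂ)‖
    nlinarith [sq_nonneg (u - v), norm_nonneg ((inner ℂ (B (b p.1)) (b p.2) : ℂ))]
  have sumMC : Summable M := sumM.of_norm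
  constructor
  · have hfib : ∀ i, Summable (fun j => ‖M (i, j)‖) := fun i => sumM.prod_factor i
    have hsums : Summable (fun i => ∑' j, ‖M (i, j)‖) :=
      ((summable_prod_of_nonneg (fun p => norm_nonneg _)).1 sumM).2
    refine Summable.of_nonneg_of_le (fun i => norm_nonneg _) (fun i => ?_) hsums
    rw [← (key1 i).tsum_eq]
    exact norm_tsum_le_tsum_norm (hfib i)
  · calc ∑' i, (inner ℂ ((A * B) (b i)) (b i) : ℂ)
        = ∑' i, ∑' j, M (i, j) := tsum_congr (fun i => ((key1 i).tsum_eq).symm)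
      _ = ∑' j, ∑' i, M (i, j) := by
          have sumMC' : Summable (Function.uncurry fun i j => M (i, j)) := by
            exact sumMC
          exact (Summable.tsum_comm' sumMC' (fun i => (key1 i).summable)
            (fun j => (key2 j).summable)).symm
      _ = ∑' j, (inner ℂ ((B * A) (b j)) (b j) : ℂ) := tsum_congr (fun j => (key2 j).tsum_eq)



noncomputable def fmPos (B : H →L[ℂ] H) : H →L[ℂ] H := cfc (fun t : ℝ => t ⊔ 0) B
noncomputable def fmPosSqrt (B : H →L[ℂ] H) : H →L[ℂ] H := cfc (fun t : ℝ => Real.sqrt (t ⊔ 0)) B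

lemma contPos : Continuous (fun t : ℝ => t ⊔ 0) := continuous_id.max continuous_const
lemma contPosSqrt : Continuous (fun t : ℝ => Real.sqrt (t ⊔ 0)) := Real.continuous_sqrt.comp contPos

lemma fmPosSqrt_sa (B : H →L[ℂ] H) : IsSelfAdjoint (fmPosSqrt B) := cfc_predicate _ B
lemma fmPos_sa (B : H →L[ℂ] H) : IsSelfAdjoint (fmPos B) := cfc_predicate _ B

lemma fmPosSqrt_sq (B : H →L[ℂ] H) :
    fmPosSqrt B * fmPosSqrt B = fmPos B := by
  rw [fmPosSqrt, ← cfc_mul _ _ B (contPosSqrt.continuousOn) (contPosSqrt.continuousOn)]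
  exact cfc_congr (fun t _ => Real.mul_self_sqrt (le_max_right _ _))

lemma fmPos_neg (B : H →L[ℂ] H) (hB : IsSelfAdjoint B) :
    fmPos (-B) = cfc (fun t : ℝ => (-t) ⊔ 0) B := by
  rw [fmPos, ← cfc_comp_neg _ B (hf := by fun_prop)]

lemma fmPos_sub (B : H →L[ℂ] H) (hB : IsSelfAdjoint B) :
    fmPos B - fmPos (-B) = B := by
  rw [fmPos_neg B hB, fmPos, ← cfc_sub _ _ B contPos.continuousOn (by fun_prop)]
  calc _ = cfc (id : ℝ → ℝ) B := cfc_congr (fun t _ => by simp [max_def]; split <;> split <;> linarith)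
  _ = B := cfc_id ℝ B

lemma fmPos_mul_neg (B : H →L[ℂ] H) (hB : IsSelfAdjoint B) :
    fmPos B * fmPos (-B) = 0 := by
  rw [fmPos_neg B hB, fmPos, ← cfc_mul _ _ B contPos.continuousOn (by fun_prop)]
  have h1 : cfc (fun t : ℝ => (t ⊔ 0) * ((-t) ⊔ 0)) B = cfc (fun _ : ℝ => (0:ℝ)) B := by
    apply cfc_congr
    intro t _
    simp only []
    rcases le_total t 0 with h|h
    · rw [max_eq_right h]; ring
    · rw [max_eq_right (neg_nonpos.2 h)]; ring
  rw [h1, cfc_const (0:ℝ) B]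
  simp

lemma fm_inner_sq {R : H →L[ℂ] H} (hR : IsSelfAdjoint R) (v : H) :
    (inner ℂ ((R * R) v) v : ℂ) = ((‖R v‖ ^ 2 : ℝ) : ℂ) := by
  have hadj : adjoint R = R := ContinuousLinearMap.isSelfAdjoint_iff'.1 hR
  rw [ContinuousLinearMap.mul_apply]
  calc (inner ℂ (R (R v)) v : ℂ) = inner ℂ ((adjoint R) (R v)) v := by rw [hadj]
    _ = inner ℂ (R v) (R v) := ContinuousLinearMap.adjoint_inner_left R v (R v)
    _ = _ := by rw [inner_self_eq_norm_sq_to_K]; norm_cast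

/-- Key estimate: for selfadjoint `B` with absolutely summable diagonals, the positive
square-root part is Hilbert–Schmidt. -/
lemma fmHS_fmPosSqrt {B : H →L[ℂ] H} (hB : IsSelfAdjoint B)
    (h : ∀ (ι : Type) (b : HilbertBasis ι ℂ H),
      Summable (fun i => ‖(inner ℂ (B (b i)) (b i) : ℂ)‖)) :
    ∃ (ι : Type) (b : HilbertBasis ι ℂ H), Summable (fun i => ‖(fmPosSqrt B) (b i)‖ ^ 2) := by
  classical
  set R := fmPosSqrt B with hRdef
  set P := fmPos B with hPdef
  set N := fmPos (-B) with hNdef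
  have hR2 : R * R = P := fmPosSqrt_sq B
  have hRsa : IsSelfAdjoint R := fmPosSqrt_sa B
  have hNsa : IsSelfAdjoint N := fmPos_sa (-B)
  have hPN : P * N = 0 := fmPos_mul_neg B hB
  have hsub : P - N = B := fmPos_sub B hB
  set K : Submodule ℂ H := (LinearMap.ker (P : H →ₗ[ℂ] H))ᗮ with hKdef
  haveI : CompleteSpace ↥(LinearMap.ker (P : H →ₗ[ℂ] H)) :=
    (ContinuousLinearMap.isClosed_ker P).completeSpace_coe
  have fact2 : ∀ v : H, v ∈ K → N v = 0 := by
    intro v hv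
    have hNN : N (N v) ∈ LinearMap.ker (P : H →ₗ[ℂ] H) := by
      rw [LinearMap.mem_ker]
      have := ContinuousLinearMap.ext_iff.1 hPN (N v)
      simpa using this
    have hvz : (inner ℂ v (N (N v)) : ℂ) = 0 := by
      rw [hKdef, Submodule.mem_orthogonal'] at hv
      exact hv _ hNN
    have : (inner ℂ (N v) (N v) : ℂ) = 0 := by
      have hadj : adjoint N = N := ContinuousLinearMap.isSelfAdjoint_iff'.1 hNsa
      calc (inner ℂ (N v) (N v) : ℂ) = inner ℂ ((adjoint N) v) (N v) := by rw [hadj]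
        _ = inner ℂ v (N (N v)) := ContinuousLinearMap.adjoint_inner_left N (N v) v
        _ = 0 := hvz
    exact inner_self_eq_zero.1 this
  have fact3 : ∀ v : H, v ∈ Kᗮ → P v = 0 := by
    intro v hv
    rw [hKdef, Submodule.orthogonal_orthogonal] at hv
    exact hv
  obtain ⟨w, bK, hbK⟩ := exists_hilbertBasis ℂ ↥K
  have horthK := bK.orthonormal
  rw [hbK] at horthK
  set sset : Set H := (fun v : ↥K => (v : H)) '' w with hsset
  have hsubK : ∀ x ∈ sset, x ∈ K := by
    rintro x ⟨v, hv, rfl⟩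
    exact v.2
  have hor : Orthonormal ℂ ((↑) : sset → H) := by
    rw [orthonormal_subtype_iff_ite]
    rintro x ⟨vx, hvx, rfl⟩ y ⟨vy, hvy, rfl⟩
    rw [orthonormal_iff_ite] at horthK
    have hKo := horthK ⟨vx, hvx⟩ ⟨vy, hvy⟩
    simp only [Submodule.coe_inner] at hKo
    rw [hKo]
    congr 1
    simp only [eq_iff_iff, Subtype.mk.injEq]
    exact ⟨fun hEq => congrArg _ hEq, fun hEq => Subtype.coe_injective hEq⟩
  obtain ⟨w', b, hsw, hb⟩ := hor.exists_hilbertBasis_extension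
  have horth := b.orthonormal
  rw [hb] at horth
  have hcases : ∀ i : w', ((i : H) ∈ K) ∨ ((i : H) ∈ Kᗮ) := by
    intro i
    by_cases hi : (i : H) ∈ sset
    · exact Or.inl (hsubK _ hi)
    · right
      set g : ↥K →L[ℂ] ℂ := (innerSL ℂ (i : H)).comp K.subtypeL with hg
      have hspan : Submodule.span ℂ (Set.range ⇑bK) ≤ LinearMap.ker (g : ↥K →ₗ[ℂ] ℂ) := by
        rw [hbK, Subtype.range_coe]
        rw [Submodule.span_le]
        intro v hv
        have hmem : ((v : ↥K) : H) ∈ sset := ⟨v, hv, rfl⟩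
        have hmem' : ((v : ↥K) : H) ∈ w' := hsw hmem
        have hne : i ≠ (⟨_, hmem'⟩ : w') := by
          intro hEq
          apply hi
          rw [hEq]
          exact hmem
        have h2 := horth.2 hne
        simp only [SetLike.mem_coe, LinearMap.mem_ker]
        rw [hg]
        simp only [ContinuousLinearMap.coe_coe, ContinuousLinearMap.comp_apply, Submodule.subtypeL_apply, innerSL_apply_apply]
        exact h2
      have hclosed : (Submodule.span ℂ (Set.range ⇑bK)).topologicalClosure ≤ LinearMap.ker (g : ↥K →ₗ[ℂ] ℂ) :=
        (Submodule.span ℂ (Set.range ⇑bK)).topologicalClosure_minimal hspan (ContinuousLinearMap.isClosed_ker g)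
      have htotal : ∀ u : ↥K, g u = 0 := by
        intro u
        have hu : u ∈ (Submodule.span ℂ (Set.range ⇑bK)).topologicalClosure := by
          rw [bK.dense_span]; trivial
        exact hclosed hu
      rw [Submodule.mem_orthogonal]
      intro u hu
      have h3 := htotal ⟨u, hu⟩
      rw [hg] at h3
      simp only [ContinuousLinearMap.comp_apply, Submodule.subtypeL_apply, innerSL_apply_apply] at h3
      rw [← inner_conj_symm, h3]
      simp
  have hbound : ∀ i : w', ‖R (i : H)‖ ^ 2 ≤ ‖(inner ℂ (B (i : H)) ((i : H)) : ℂ)‖ := by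
    intro i
    rcases hcases i with hK | hKo
    · have hNz : N (i : H) = 0 := fact2 _ hK
      have hBP : B (i : H) = P (i : H) := by
        have := ContinuousLinearMap.ext_iff.1 hsub (i : H)
        simp only [ContinuousLinearMap.sub_apply] at this
        rw [← this, hNz, sub_zero]
      have hre : (inner ℂ (B (i : H)) ((i : H)) : ℂ) = ((‖R (i : H)‖ ^ 2 : ℝ) : ℂ) := by
        rw [hBP, ← hR2]
        exact fm_inner_sq hRsa _
      rw [hre, Complex.norm_real, Real.norm_eq_abs, abs_of_nonneg (sq_nonneg _)]
    · have hPz : P (i : H) = 0 := fact3 _ hKo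
      have hz : ((‖R (i : H)‖ ^ 2 : ℝ) : ℂ) = 0 := by
        rw [← fm_inner_sq hRsa _, hR2, hPz]
        simp
      have h0 : ‖R (i : H)‖ ^ 2 = 0 := by exact_mod_cast hz
      rw [h0]
      exact norm_nonneg _
  refine ⟨w', b, ?_⟩
  have hs := h _ b
  rw [hb] at hs
  have hfun : (fun i : w' => ‖R (b i)‖ ^ 2) = fun i : w' => ‖R (i : H)‖ ^ 2 := by rw [hb]
  rw [hfun]
  exact Summable.of_nonneg_of_le (fun i => sq_nonneg _) hbound hs




lemma fmDg_add {ι : Type} (b : HilbertBasis ι ℂ H) (z w : H →L[ℂ] H) (i : ι) :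
    (inner ℂ ((z + w) (b i)) (b i) : ℂ) = (inner ℂ (z (b i)) (b i) : ℂ) + (inner ℂ (w (b i)) (b i) : ℂ) := by
  rw [ContinuousLinearMap.add_apply, inner_add_left]

lemma fmDg_sub {ι : Type} (b : HilbertBasis ι ℂ H) (z w : H →L[ℂ] H) (i : ι) :
    (inner ℂ ((z - w) (b i)) (b i) : ℂ) = (inner ℂ (z (b i)) (b i) : ℂ) - (inner ℂ (w (b i)) (b i) : ℂ) := by
  rw [ContinuousLinearMap.sub_apply, inner_sub_left]

lemma fmDg_smul {ι : Type} (b : HilbertBasis ι ℂ H) (c : ℂ) (z : H →L[ℂ] H) (i : ι) :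
    (inner ℂ ((c • z) (b i)) (b i) : ℂ) = conj c * (inner ℂ (z (b i)) (b i) : ℂ) := by
  rw [ContinuousLinearMap.smul_apply, inner_smul_left]

lemma FMMemTC.add {x y : H →L[ℂ] H} (hx : FMMemTC x) (hy : FMMemTC y) : FMMemTC (x + y) := by
  intro ι b
  refine Summable.of_nonneg_of_le (fun i => norm_nonneg _) (fun i => ?_) ((hx ι b).add (hy ι b))
  rw [fmDg_add]
  exact norm_add_le _ _

lemma FMMemTC.smul (c : ℂ) {x : H →L[ℂ] H} (hx : FMMemTC x) : FMMemTC (c • x) := by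
  intro ι b
  refine Summable.of_nonneg_of_le (fun i => norm_nonneg _) (fun i => ?_) (((hx ι b).mul_left ‖c‖))
  rw [fmDg_smul, norm_mul, RCLike.norm_conj]

lemma FMMemTC.neg {x : H →L[ℂ] H} (hx : FMMemTC x) : FMMemTC (-x) := by
  have := hx.smul (-1)
  simpa using this

lemma FMMemTC.starOp {x : H →L[ℂ] H} (hx : FMMemTC x) : FMMemTC (star x) := by
  intro ι b
  refine ((hx ι b).congr (fun i => ?_))
  have h1 : (inner ℂ ((star x) (b i)) (b i) : ℂ) = conj (inner ℂ (x (b i)) (b i) : ℂ) := by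
    rw [show ((star x : H →L[ℂ] H)) = adjoint x from rfl]
    rw [ContinuousLinearMap.adjoint_inner_left x (b i) (b i), ← inner_conj_symm]
  rw [h1, RCLike.norm_conj]

lemma fmHS_of_sa_memTC {B : H →L[ℂ] H} (hB : IsSelfAdjoint B) (h : FMMemTC B) :
    FMHS (fmPosSqrt B) := by
  obtain ⟨ι, b, hs⟩ := fmHS_fmPosSqrt hB h
  exact FMHS.of_basis hs

lemma FMMemTC.sub {x y : H →L[ℂ] H} (hx : FMMemTC x) (hy : FMMemTC y) : FMMemTC (x - y) := by
  rw [sub_eq_add_neg]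
  exact hx.add hy.neg

/-- Decomposition of a trace-class operator into positive finite-HS squares. -/
lemma FMMemTC.decomp {x : H →L[ℂ] H} (hx : FMMemTC x) :
    ∃ R₁ R₂ R₃ R₄ : H →L[ℂ] H, FMHS R₁ ∧ FMHS R₂ ∧ FMHS R₃ ∧ FMHS R₄ ∧
      x = R₁ * R₁ - R₂ * R₂ + Complex.I • (R₃ * R₃) - Complex.I • (R₄ * R₄) := by
  set y : H →L[ℂ] H := star x with hy
  have hxy : FMMemTC y := hx.starOp
  set B : H →L[ℂ] H := (2⁻¹ : ℂ) • (x + y) with hBdef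
  set C : H →L[ℂ] H := ((Complex.I / 2) : ℂ) • (y - x) with hCdef
  have hBsa : IsSelfAdjoint B := by
    rw [IsSelfAdjoint, hBdef, star_smul, star_add, hy, star_star]
    rw [show (star (2⁻¹ : ℂ)) = (2⁻¹ : ℂ) by simp [Complex.star_def, Complex.ext_iff]]
    rw [add_comm]
  have hCsa : IsSelfAdjoint C := by
    rw [IsSelfAdjoint, hCdef, star_smul, star_sub, hy, star_star]
    rw [show (star (Complex.I / 2)) = -(Complex.I / 2) by simp [Complex.star_def, Complex.ext_iff]; norm_num]
    module
  have hBmem : FMMemTC B := (hx.add hxy).smul _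
  have hCmem : FMMemTC C := (hxy.sub hx).smul _
  have hBmem' : FMMemTC (-B) := hBmem.neg
  have hCmem' : FMMemTC (-C) := hCmem.neg
  refine ⟨fmPosSqrt B, fmPosSqrt (-B), fmPosSqrt C, fmPosSqrt (-C),
    fmHS_of_sa_memTC hBsa hBmem, fmHS_of_sa_memTC hBsa.neg hBmem',
    fmHS_of_sa_memTC hCsa hCmem, fmHS_of_sa_memTC hCsa.neg hCmem', ?_⟩
  rw [fmPosSqrt_sq, fmPosSqrt_sq, fmPosSqrt_sq, fmPosSqrt_sq]
  have e1 : fmPos B - fmPos (-B) = B := fmPos_sub B hBsa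
  have e2 : fmPos C - fmPos (-C) = C := fmPos_sub C hCsa
  have hxBC : x = B + Complex.I • C := by
    rw [hBdef, hCdef, hy, smul_smul]
    have hII : Complex.I * (Complex.I / 2) = -(2⁻¹ : ℂ) := by
      rw [mul_div_assoc', Complex.I_mul_I]
      norm_num
    rw [hII]
    module
  rw [show fmPos B - fmPos (-B) + Complex.I • fmPos C - Complex.I • fmPos (-C)
      = (fmPos B - fmPos (-B)) + Complex.I • (fmPos C - fmPos (-C)) by module,
    e1, e2]
  exact hxBC

/-- Cyclicity against a positive finite-HS square. -/
lemma fm_cyclic_sq {R : H →L[ℂ] H} (hR : FMHS R) (s : H →L[ℂ] H) :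
    FMMemTC (s * (R * R)) ∧ FMMemTC ((R * R) * s) ∧
      ∀ (ι : Type) (b : HilbertBasis ι ℂ H),
        ∑' i, (inner ℂ ((s * (R * R)) (b i)) (b i) : ℂ)
          = ∑' i, (inner ℂ (((R * R) * s) (b i)) (b i) : ℂ) := by
  have hsR : FMHS (s * R) := hR.mul_left s
  have hRs : FMHS (R * s) := hR.mul_right s
  refine ⟨?_, ?_, ?_⟩
  · intro ι b
    have := (fm_swap b (s * R) R (hsR ι b) (hR ι b)).1
    rwa [mul_assoc] at this
  · intro ι b
    have := (fm_swap b R (R * s) (hR ι b) (hRs ι b)).1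
    rwa [← mul_assoc] at this
  · intro ι b
    have h1 := (fm_swap b (s * R) R (hsR ι b) (hR ι b)).2
    have h2 := (fm_swap b (R * s) R (hRs ι b) (hR ι b)).2
    rw [mul_assoc] at h1
    rw [show R * (s * R) = (R * s) * R by rw [mul_assoc]] at h1
    rw [h1, h2, ← mul_assoc]

lemma fm_tsum_split {ι : Type} (b : HilbertBasis ι ℂ H) (z₁ z₂ z₃ z₄ : H →L[ℂ] H)
    (m₁ : Summable (fun i => ‖(inner ℂ (z₁ (b i)) (b i) : ℂ)‖))
    (m₂ : Summable (fun i => ‖(inner ℂ (z₂ (b i)) (b i) : ℂ)‖))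
    (m₃ : Summable (fun i => ‖(inner ℂ (z₃ (b i)) (b i) : ℂ)‖))
    (m₄ : Summable (fun i => ‖(inner ℂ (z₄ (b i)) (b i) : ℂ)‖)) :
    ∑' i, (inner ℂ ((z₁ - z₂ + Complex.I • z₃ - Complex.I • z₄) (b i)) (b i) : ℂ)
      = ∑' i, (inner ℂ (z₁ (b i)) (b i) : ℂ) - ∑' i, (inner ℂ (z₂ (b i)) (b i) : ℂ)
        + conj Complex.I * ∑' i, (inner ℂ (z₃ (b i)) (b i) : ℂ)
        - conj Complex.I * ∑' i, (inner ℂ (z₄ (b i)) (b i) : ℂ) := by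
  have s₁ := m₁.of_norm
  have s₂ := m₂.of_norm
  have s₃ := m₃.of_norm
  have s₄ := m₄.of_norm
  have hpt : ∀ i, (inner ℂ ((z₁ - z₂ + Complex.I • z₃ - Complex.I • z₄) (b i)) (b i) : ℂ)
      = ((inner ℂ (z₁ (b i)) (b i) : ℂ) - (inner ℂ (z₂ (b i)) (b i) : ℂ)
        + conj Complex.I * (inner ℂ (z₃ (b i)) (b i) : ℂ))
        - conj Complex.I * (inner ℂ (z₄ (b i)) (b i) : ℂ) := by
    intro i
    rw [fmDg_sub, fmDg_add, fmDg_sub, fmDg_smul, fmDg_smul]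
  rw [tsum_congr hpt]
  rw [Summable.tsum_sub (((s₁.sub s₂).add (s₃.mul_left _))) (s₄.mul_left _)]
  rw [Summable.tsum_add (s₁.sub s₂) (s₃.mul_left _)]
  rw [Summable.tsum_sub s₁ s₂, tsum_mul_left, tsum_mul_left]

/-- Full cyclicity: for trace-class `x` and bounded `s`. -/
lemma fm_cyclic {x : H →L[ℂ] H} (hx : FMMemTC x) (s : H →L[ℂ] H) :
    FMMemTC (s * x) ∧ FMMemTC (x * s) ∧
      ∀ (ι : Type) (b : HilbertBasis ι ℂ H),
        ∑' i, (inner ℂ ((s * x) (b i)) (b i) : ℂ)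
          = ∑' i, (inner ℂ ((x * s) (b i)) (b i) : ℂ) := by
  obtain ⟨R₁, R₂, R₃, R₄, h1, h2, h3, h4, hdec⟩ := hx.decomp
  have c1 := fm_cyclic_sq h1 s
  have c2 := fm_cyclic_sq h2 s
  have c3 := fm_cyclic_sq h3 s
  have c4 := fm_cyclic_sq h4 s
  have hLops : s * x = (s * (R₁ * R₁)) - (s * (R₂ * R₂))
      + Complex.I • (s * (R₃ * R₃)) - Complex.I • (s * (R₄ * R₄)) := by
    rw [hdec]
    rw [mul_sub, mul_add, mul_sub, mul_smul_comm, mul_smul_comm]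
  have hRops : x * s = ((R₁ * R₁) * s) - ((R₂ * R₂) * s)
      + Complex.I • ((R₃ * R₃) * s) - Complex.I • ((R₄ * R₄) * s) := by
    rw [hdec]
    rw [sub_mul, add_mul, sub_mul, smul_mul_assoc, smul_mul_assoc]
  have memL : FMMemTC (s * x) := by
    rw [hLops]
    exact ((c1.1.sub c2.1).add (c3.1.smul Complex.I)).sub (c4.1.smul Complex.I)
  have memR : FMMemTC (x * s) := by
    rw [hRops]
    exact ((c1.2.1.sub c2.2.1).add (c3.2.1.smul Complex.I)).sub (c4.2.1.smul Complex.I)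
  refine ⟨memL, memR, ?_⟩
  intro ι b
  rw [hLops, hRops]
  rw [fm_tsum_split b _ _ _ _ (c1.1 ι b) (c2.1 ι b) (c3.1 ι b) (c4.1 ι b),
    fm_tsum_split b _ _ _ _ (c1.2.1 ι b) (c2.2.1 ι b) (c3.2.1 ι b) (c4.2.1 ι b)]
  rw [c1.2.2 ι b, c2.2.2 ι b, c3.2.2 ι b, c4.2.2 ι b]

/-- Ring identity: `εF` commutes with `[F, p]`. -/
lemma fm_comm_ring {R : Type*} [Ring R] (e f p : R) (hf : f * f = 1)
    (hep : e * p = p * e) (hef : e * f = -(f * e)) :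
    (e * f) * (f * p - p * f) = (f * p - p * f) * (e * f) := by
  have hfe : f * e = -(e * f) := by rw [hef, neg_neg]
  have l1 : e * f * (f * p) = e * p := by
    rw [show e * f * (f * p) = e * (f * f) * p by noncomm_ring, hf, mul_one]
  have l2 : f * p * (e * f) = -(e * f * (p * f)) := by
    rw [show f * p * (e * f) = f * (p * e) * f by noncomm_ring, ← hep,
      show f * (e * p) * f = (f * e) * (p * f) by noncomm_ring, hfe]
    noncomm_ring
  have l3 : p * f * (e * f) = -(e * p) := by
    rw [show p * f * (e * f) = p * (f * e) * f by noncomm_ring, hfe,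
      show p * -(e * f) * f = -(p * e * (f * f)) by noncomm_ring, hf, ← hep]
    noncomm_ring
  rw [mul_sub, sub_mul, l1, l2, l3]
  noncomm_ring

end FMAuxAll

/-- The character of a 1-summable (even) Fredholm module `(H, F)` over an algebra `A`,
`φ(a) = ½·Tr(ε F [F, a])`, is a trace on `A`: `φ(ab) = φ(ba)`.

Here `H` is a ℤ/2-graded Hilbert space with grading operator `ε` (a self-adjoint
unitary), `A` acts by even bounded operators via `π`, `F` is an odd bounded operator
with `F² = 1`, and all the commutators `[F, π a]` are trace class.  Trace-class-ness
of an operator `x` is encoded by the (equivalent) condition that its diagonal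
`i ↦ ⟨x eᵢ, eᵢ⟩` is absolutely summable with respect to every Hilbert basis, and the
operator trace `tr` is pinned down on trace-class operators as the value of the sum of
the diagonal in any Hilbert basis. -/
theorem fredholm_module_character_is_trace
    {H : Type} [NormedAddCommGroup H] [InnerProductSpace ℂ H] [CompleteSpace H]
    {A : Type*} [Ring A] [Algebra ℂ A]
    (π : A →ₐ[ℂ] (H →L[ℂ] H)) (ε F : H →L[ℂ] H)
    (hε2 : ε * ε = 1) (hεsa : star ε = ε)
    (heven : ∀ a : A, ε * π a = π a * ε)
    (hodd : ε * F = -(F * ε)) (hF2 : F * F = 1)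
    (hsummable : ∀ (a : A) (ι : Type) (b : HilbertBasis ι ℂ H),
      Summable (fun i => ‖(inner ℂ ((F * π a - π a * F) (b i)) (b i) : ℂ)‖))
    (tr : (H →L[ℂ] H) → ℂ)
    (htr : ∀ x : H →L[ℂ] H,
      (∀ (ι : Type) (b : HilbertBasis ι ℂ H),
        Summable (fun i => ‖(inner ℂ (x (b i)) (b i) : ℂ)‖)) →
      ∀ (ι : Type) (b : HilbertBasis ι ℂ H),
        HasSum (fun i => (inner ℂ (x (b i)) (b i) : ℂ)) (tr x)) :
    ∀ a b : A,
      (1 / 2 : ℂ) * tr (ε * (F * (F * π (a * b) - π (a * b) * F))) =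
      (1 / 2 : ℂ) * tr (ε * (F * (F * π (b * a) - π (b * a) * F))) := by
  intro a b
  obtain ⟨w0, b₀, -⟩ := exists_hilbertBasis ℂ H
  have hTmem : ∀ c : A, FMMemTC (F * π c - π c * F) := fun c => hsummable c
  have comm : ∀ c : A, (ε * F) * (F * π c - π c * F) = (F * π c - π c * F) * (ε * F) :=
    fun c => fm_comm_ring ε F (π c) hF2 (heven c) hodd
  have leib : ∀ u v : A, (F * π (u * v) - π (u * v) * F)
      = (F * π u - π u * F) * π v + π u * (F * π v - π v * F) := by
    intro u v
    rw [map_mul]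
    noncomm_ring
  -- memberships
  have m1 : FMMemTC ((ε * F) * (F * π (a * b) - π (a * b) * F)) :=
    (fm_cyclic (hTmem (a * b)) (ε * F)).1
  have m2 : FMMemTC ((ε * F) * (F * π (b * a) - π (b * a) * F)) :=
    (fm_cyclic (hTmem (b * a)) (ε * F)).1
  have mTaπb : FMMemTC ((F * π a - π a * F) * π b) := (fm_cyclic (hTmem a) (π b)).2.1
  have mπaTb : FMMemTC (π a * (F * π b - π b * F)) := (fm_cyclic (hTmem b) (π a)).1
  have mTbπa : FMMemTC ((F * π b - π b * F) * π a) := (fm_cyclic (hTmem b) (π a)).2.1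
  have mπbTa : FMMemTC (π b * (F * π a - π a * F)) := (fm_cyclic (hTmem a) (π b)).1
  have mu₁ : FMMemTC ((ε * F) * ((F * π a - π a * F) * π b)) := (fm_cyclic mTaπb (ε * F)).1
  have mu₂ : FMMemTC ((ε * F) * (π a * (F * π b - π b * F))) := (fm_cyclic mπaTb (ε * F)).1
  have mu₃ : FMMemTC ((ε * F) * (π b * (F * π a - π a * F))) := (fm_cyclic mπbTa (ε * F)).1
  have mu₄ : FMMemTC ((ε * F) * ((F * π b - π b * F) * π a)) := (fm_cyclic mTbπa (ε * F)).1
  -- additivity of diagonal sums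
  have τadd : ∀ z w : H →L[ℂ] H, FMMemTC z → FMMemTC w →
      (∑' i, (inner ℂ ((z + w) (b₀ i)) (b₀ i) : ℂ))
        = (∑' i, (inner ℂ (z (b₀ i)) (b₀ i) : ℂ)) + ∑' i, (inner ℂ (w (b₀ i)) (b₀ i) : ℂ) := by
    intro z w hz hw
    rw [tsum_congr (fun i => fmDg_add b₀ z w i)]
    exact Summable.tsum_add ((hz _ b₀).of_norm) ((hw _ b₀).of_norm)
  -- key cyclic moves
  have key1 : (∑' i, (inner ℂ (((ε * F) * ((F * π a - π a * F) * π b)) (b₀ i)) (b₀ i) : ℂ))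
      = ∑' i, (inner ℂ (((ε * F) * (π b * (F * π a - π a * F))) (b₀ i)) (b₀ i) : ℂ) := by
    have e1 : (ε * F) * ((F * π a - π a * F) * π b)
        = (F * π a - π a * F) * ((ε * F) * π b) := by
      calc (ε * F) * ((F * π a - π a * F) * π b)
          = ((ε * F) * (F * π a - π a * F)) * π b := by noncomm_ring
        _ = ((F * π a - π a * F) * (ε * F)) * π b := by rw [comm a]
        _ = (F * π a - π a * F) * ((ε * F) * π b) := by noncomm_ring
    have e2 : ((ε * F) * π b) * (F * π a - π a * F)
        = (ε * F) * (π b * (F * π a - π a * F)) := by noncomm_ring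
    rw [e1, ← e2]
    exact ((fm_cyclic (hTmem a) ((ε * F) * π b)).2.2 _ b₀).symm
  have key2 : (∑' i, (inner ℂ (((ε * F) * (π a * (F * π b - π b * F))) (b₀ i)) (b₀ i) : ℂ))
      = ∑' i, (inner ℂ (((ε * F) * ((F * π b - π b * F) * π a)) (b₀ i)) (b₀ i) : ℂ) := by
    have e1 : (ε * F) * (π a * (F * π b - π b * F))
        = ((ε * F) * π a) * (F * π b - π b * F) := by noncomm_ring
    have e2 : (F * π b - π b * F) * ((ε * F) * π a)
        = (ε * F) * ((F * π b - π b * F) * π a) := by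
      calc (F * π b - π b * F) * ((ε * F) * π a)
          = ((F * π b - π b * F) * (ε * F)) * π a := by noncomm_ring
        _ = ((ε * F) * (F * π b - π b * F)) * π a := by rw [comm b]
        _ = (ε * F) * ((F * π b - π b * F) * π a) := by noncomm_ring
    rw [e1, ← e2]
    exact (fm_cyclic (hTmem b) ((ε * F) * π a)).2.2 _ b₀
  -- splittings
  have hsplit1 : (ε * F) * (F * π (a * b) - π (a * b) * F)
      = (ε * F) * ((F * π a - π a * F) * π b) + (ε * F) * (π a * (F * π b - π b * F)) := by
    rw [leib a b, mul_add]
  have hsplit2 : (ε * F) * (F * π (b * a) - π (b * a) * F)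
      = (ε * F) * ((F * π b - π b * F) * π a) + (ε * F) * (π b * (F * π a - π a * F)) := by
    rw [leib b a, mul_add]
  -- main chain of equalities of diagonal sums
  have main : (∑' i, (inner ℂ (((ε * F) * (F * π (a * b) - π (a * b) * F)) (b₀ i)) (b₀ i) : ℂ))
      = ∑' i, (inner ℂ (((ε * F) * (F * π (b * a) - π (b * a) * F)) (b₀ i)) (b₀ i) : ℂ) := by
    calc (∑' i, (inner ℂ (((ε * F) * (F * π (a * b) - π (a * b) * F)) (b₀ i)) (b₀ i) : ℂ))
        = (∑' i, (inner ℂ (((ε * F) * ((F * π a - π a * F) * π b)) (b₀ i)) (b₀ i) : ℂ))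
          + ∑' i, (inner ℂ (((ε * F) * (π a * (F * π b - π b * F))) (b₀ i)) (b₀ i) : ℂ) := by
          rw [hsplit1]
          exact τadd _ _ mu₁ mu₂
      _ = (∑' i, (inner ℂ (((ε * F) * (π b * (F * π a - π a * F))) (b₀ i)) (b₀ i) : ℂ))
          + ∑' i, (inner ℂ (((ε * F) * ((F * π b - π b * F) * π a)) (b₀ i)) (b₀ i) : ℂ) := by
          rw [key1, key2]
      _ = (∑' i, (inner ℂ (((ε * F) * ((F * π b - π b * F) * π a)) (b₀ i)) (b₀ i) : ℂ))
          + ∑' i, (inner ℂ (((ε * F) * (π b * (F * π a - π a * F))) (b₀ i)) (b₀ i) : ℂ) := by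
          ring
      _ = _ := by
          rw [hsplit2]
          exact (τadd _ _ mu₄ mu₃).symm
  -- connect with tr
  have hX : ε * (F * (F * π (a * b) - π (a * b) * F))
      = (ε * F) * (F * π (a * b) - π (a * b) * F) := by noncomm_ring
  have hY : ε * (F * (F * π (b * a) - π (b * a) * F))
      = (ε * F) * (F * π (b * a) - π (b * a) * F) := by noncomm_ring
  have trX : tr ((ε * F) * (F * π (a * b) - π (a * b) * F))
      = ∑' i, (inner ℂ (((ε * F) * (F * π (a * b) - π (a * b) * F)) (b₀ i)) (b₀ i) : ℂ) :=
    ((htr _ m1 _ b₀).tsum_eq).symm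
  have trY : tr ((ε * F) * (F * π (b * a) - π (b * a) * F))
      = ∑' i, (inner ℂ (((ε * F) * (F * π (b * a) - π (b * a) * F)) (b₀ i)) (b₀ i) : ℂ) :=
    ((htr _ m2 _ b₀).tsum_eq).symm
  rw [hX, hY, trX, trY, main]
end
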